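/- For every m ≥ 1, the flat torus T² can be covered by m sets each of diameter at most √(1/4 + 1/m²). -/

import Mathlib

open scoped Real Pointwise

/-- The Euclidean (flat) distance on the torus `T² = ℝ²/ℤ²`. -/
noncomputable def torusDist (u v : AddCircle (1:ℝ) × AddCircle (1:ℝ)) : ℝ :=
  Real.sqrt (‖u.1 - v.1‖ ^ 2 + ‖u.2 - v.2‖ ^ 2)

/-- The diameter of a subset of the flat torus. -/
noncomputable def torusDiam (F : Set (AddCircle (1:ℝ) × AddCircle (1:ℝ))) : ℝ :=
  sSup {d | ∃ u ∈ F, ∃ v ∈ F, d = torusDist u v}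

/-- `d_m(T²)`: infimum of the maximal diameter over coverings of `T²` by `m` sets. -/
noncomputable def dTor (m : ℕ) : ℝ :=
  sInf {τ | ∃ F : Fin m → Set (AddCircle (1:ℝ) × AddCircle (1:ℝ)),
    (⋃ i, F i) = Set.univ ∧ ∀ i, torusDiam (F i) ≤ τ}

/-- The vertical line (circle) `l_x = {x} × T¹` on the flat torus. -/
def vline (x : ℝ) : Set (AddCircle (1:ℝ) × AddCircle (1:ℝ)) :=
  {p | p.1 = (x : AddCircle (1:ℝ))}

/-! Cover the torus by the `m` vertical strips of width `1/m`. Two points of one strip are at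
horizontal distance at most `1/m`, and any two points of the circle `ℝ/ℤ` are at distance at
most `1/2`, which bounds the vertical gap. -/

open Set

lemma AddCircle.norm_coe_sub_coe_le_of_mem_Icc {p a b x y : ℝ} (hx : x ∈ Icc a b)
    (hy : y ∈ Icc a b) : ‖(x : AddCircle p) - y‖ ≤ b - a := by
  rw [← AddCircle.coe_sub]
  exact QuotientAddGroup.norm_mk_le_norm.trans (Real.dist_le_of_mem_Icc hx hy)

lemma exists_fin_mem_Icc_div {m : ℕ} (hm : 0 < m) {x : ℝ} (hx : x ∈ Ico (0 : ℝ) 1) :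
    ∃ i : Fin m, x ∈ Icc ((i : ℝ) / m) ((i + 1) / m) := by
  have hm' : (0 : ℝ) < m := by exact_mod_cast hm
  have hxm : 0 ≤ x * m := mul_nonneg hx.1 hm'.le
  have hi : ⌊x * m⌋₊ < m := (Nat.floor_lt hxm).2 (by nlinarith [hx.2])
  refine ⟨⟨⌊x * m⌋₊, hi⟩, ?_, ?_⟩
  · rw [div_le_iff₀ hm']
    exact Nat.floor_le hxm
  · rw [le_div_iff₀ hm']
    exact (Nat.lt_floor_add_one _).le

lemma torusDist_le_sqrt {u v : AddCircle (1 : ℝ) × AddCircle (1 : ℝ)} {a b : ℝ}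
    (ha : ‖u.1 - v.1‖ ≤ a) (hb : ‖u.2 - v.2‖ ≤ b) : torusDist u v ≤ √(a ^ 2 + b ^ 2) :=
  Real.sqrt_le_sqrt <| add_le_add (pow_le_pow_left₀ (norm_nonneg _) ha 2)
    (pow_le_pow_left₀ (norm_nonneg _) hb 2)

lemma torusDiam_le {F : Set (AddCircle (1 : ℝ) × AddCircle (1 : ℝ))} {r : ℝ} (hr : 0 ≤ r)
    (h : ∀ u ∈ F, ∀ v ∈ F, torusDist u v ≤ r) : torusDiam F ≤ r :=
  Real.sSup_le (by rintro _ ⟨u, hu, v, hv, rfl⟩; exact h u hu v hv) hr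

def verticalStrip (a b : ℝ) : Set (AddCircle (1 : ℝ) × AddCircle (1 : ℝ)) :=
  Prod.fst ⁻¹' ((↑) '' Icc a b)

lemma torusDiam_verticalStrip_le (a b : ℝ) :
    torusDiam (verticalStrip a b) ≤ √((b - a) ^ 2 + (1 / 2) ^ 2) := by
  refine torusDiam_le (Real.sqrt_nonneg _) ?_
  rintro u ⟨x, hx, hu⟩ v ⟨y, hy, hv⟩
  refine torusDist_le_sqrt ?_ ?_
  · rw [← hu, ← hv]
    exact AddCircle.norm_coe_sub_coe_le_of_mem_Icc hx hy
  · simpa using AddCircle.norm_le_half_period (1 : ℝ) (x := u.2 - v.2) one_ne_zero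

lemma iUnion_verticalStrip_eq_univ {m : ℕ} (hm : 0 < m) :
    ⋃ i : Fin m, verticalStrip ((i : ℝ) / m) ((i + 1) / m) = univ := by
  refine eq_univ_of_forall fun p => ?_
  obtain ⟨x, hx⟩ := QuotientAddGroup.mk_surjective p.1
  obtain ⟨i, hi⟩ := exists_fin_mem_Icc_div hm ⟨Int.fract_nonneg x, Int.fract_lt_one x⟩
  exact mem_iUnion.2 ⟨i, Int.fract x, hi, by rw [AddCircle.coe_fract, hx]⟩

theorem torus_cover_stripes (m : ℕ) (hm : 1 ≤ m) :
    ∃ F : Fin m → Set (AddCircle (1:ℝ) × AddCircle (1:ℝ)),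
      (⋃ i, F i) = Set.univ ∧
      ∀ i, torusDiam (F i) ≤ Real.sqrt (1/4 + 1/(m:ℝ)^2) := by
  refine ⟨fun i => verticalStrip ((i : ℝ) / m) ((i + 1) / m), iUnion_verticalStrip_eq_univ hm,
    fun i => (torusDiam_verticalStrip_le _ _).trans_eq ?_⟩
  congr 1
  ring
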